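/- arXiv:2110.03246 — 6 statements merged into one kernel-verified Lean document; each statement's English description precedes it below -/
import Mathlib

section
/- Let M be the structure whose domain is the set of pairs (m,n) ∈ ℕ × ℤ such that m = 0 implies n ≥ 0, with zero element (0,0), successor s((m,n)) = (m, n+1), predecessor p((m,n)) = (m, n−1) if m ≠ 0 and (0, max(n−1,0)) if m = 0, and addition (m₁,n₁) + (m₂,n₂) = (m₁+m₂, n₁+n₂). Then M satisfies: s(0) ≠ 0, p(0) = 0, p(s(x)) = x, x + 0 = x, x + s(y) = s(x + y), x = 0 ∨ x = s(p(x)), commutativity and associativity of +, and cancellation x + y = x + z → y = z. -/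
namespace Stmt0

/-- Domain of the structure `M`: pairs `(m,n) ∈ ℕ × ℤ` with `m = 0 → n ≥ 0`. -/
def D : Type := {x : ℕ × ℤ // x.1 = 0 → 0 ≤ x.2}

def zero : D := ⟨(0, 0), fun _ => le_refl 0⟩

def succ (a : D) : D := ⟨(a.1.1, a.1.2 + 1), fun h => by have := a.2 h; omega⟩

def pred (a : D) : D :=
  if h : a.1.1 = 0 then ⟨(0, max (a.1.2 - 1) 0), fun _ => le_max_right _ _⟩
  else ⟨(a.1.1, a.1.2 - 1), fun h0 => absurd h0 h⟩

def add (a b : D) : D :=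
  ⟨(a.1.1 + b.1.1, a.1.2 + b.1.2), fun h => by
    have h1 := a.2 (by omega)
    have h2 := b.2 (by omega)
    omega⟩

theorem ext {a b : D} (h₁ : a.1.1 = b.1.1) (h₂ : a.1.2 = b.1.2) : a = b :=
  Subtype.ext (Prod.ext h₁ h₂)

@[simp] theorem succ_val (a : D) : (succ a).1 = (a.1.1, a.1.2 + 1) := rfl

@[simp] theorem add_val (a b : D) : (add a b).1 = a.1 + b.1 := rfl

theorem pred_val_of_fst_eq_zero {a : D} (h : a.1.1 = 0) :
    (pred a).1 = (0, max (a.1.2 - 1) 0) := by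
  simp [pred, h]

theorem pred_val_of_fst_ne_zero {a : D} (h : a.1.1 ≠ 0) : (pred a).1 = (a.1.1, a.1.2 - 1) := by
  simp [pred, h]

theorem succ_zero_ne_zero : succ zero ≠ zero := fun h => by
  simpa using congrArg (fun a : D => a.1.2) h

theorem pred_zero : pred zero = zero :=
  Subtype.ext (pred_val_of_fst_eq_zero rfl)

theorem pred_succ (a : D) : pred (succ a) = a := by
  apply Subtype.ext
  by_cases h : a.1.1 = 0
  · rw [pred_val_of_fst_eq_zero (a := succ a) h, succ_val]
    have := a.2 h
    exact Prod.ext h.symm (by omega)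
  · rw [pred_val_of_fst_ne_zero (a := succ a) h, succ_val, add_sub_cancel_right]

theorem succ_pred_of_ne_zero {a : D} (ha : a ≠ zero) : succ (pred a) = a := by
  apply Subtype.ext
  by_cases h : a.1.1 = 0
  · have hpos : 0 < a.1.2 := lt_of_le_of_ne (a.2 h) fun h₂ => ha (ext h h₂.symm)
    rw [succ_val, pred_val_of_fst_eq_zero h]
    exact Prod.ext h.symm (by dsimp only; omega)
  · rw [succ_val, pred_val_of_fst_ne_zero h, sub_add_cancel]

theorem eq_zero_or_eq_succ_pred (a : D) : a = zero ∨ a = succ (pred a) :=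
  or_iff_not_imp_left.2 fun ha => (succ_pred_of_ne_zero ha).symm

protected theorem add_zero (a : D) : add a zero = a :=
  Subtype.ext (_root_.add_zero a.1)

theorem add_succ (a b : D) : add a (succ b) = succ (add a b) :=
  ext rfl (by simp [add_assoc])

protected theorem add_comm (a b : D) : add a b = add b a :=
  Subtype.ext (add_comm a.1 b.1)

protected theorem add_assoc (a b c : D) : add a (add b c) = add (add a b) c :=
  Subtype.ext (add_assoc a.1 b.1 c.1).symm

protected theorem add_left_cancel {a b c : D} (h : add a b = add a c) : b = c :=
  Subtype.ext (add_left_cancel (congrArg Subtype.val h))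

theorem stmt0 :
    succ zero ≠ zero ∧
    pred zero = zero ∧
    (∀ x, pred (succ x) = x) ∧
    (∀ x, add x zero = x) ∧
    (∀ x y, add x (succ y) = succ (add x y)) ∧
    (∀ x, x = zero ∨ x = succ (pred x)) ∧
    (∀ x y, add x y = add y x) ∧
    (∀ x y z, add x (add y z) = add (add x y) z) ∧
    (∀ x y z, add x y = add x z → y = z) :=
  ⟨succ_zero_ne_zero, pred_zero, pred_succ, Stmt0.add_zero, add_succ, eq_zero_or_eq_succ_pred,
    Stmt0.add_comm, Stmt0.add_assoc, fun _ _ _ => Stmt0.add_left_cancel⟩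

end Stmt0
end

section
/- In the structure M with domain {(m,n) ∈ ℕ × ℤ : m = 0 → n ≥ 0}, zero (0,0), s((m,n)) = (m,n+1), and addition (m₁,n₁)+(m₂,n₂) = (m₁+m₂, n₁+n₂), the element (1,0) is neither of the form y + y nor of the form s(y + y) for any element y of M. -/
namespace Stmt1

/-- Domain of the structure `M`: pairs `(m,n) ∈ ℕ × ℤ` with `m = 0 → n ≥ 0`. -/
def D : Type := {x : ℕ × ℤ // x.1 = 0 → 0 ≤ x.2}

def zero : D := ⟨(0, 0), fun _ => le_refl 0⟩

def succ (a : D) : D := ⟨(a.1.1, a.1.2 + 1), fun h => by have := a.2 h; omega⟩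

def add (a b : D) : D :=
  ⟨(a.1.1 + b.1.1, a.1.2 + b.1.2), fun h => by
    have h1 := a.2 (by omega)
    have h2 := b.2 (by omega)
    omega⟩

/-- The element `(1,0)` of `M`. -/
def oneZero : D := ⟨(1, 0), fun h => absurd h one_ne_zero⟩

theorem stmt1 :
    ¬ ∃ y : D, oneZero = add y y ∨ oneZero = succ (add y y) := by
  rintro ⟨y, h | h⟩ <;>
  · have h1 := congrArg (fun d : D => d.1.1) h
    have h2 := congrArg (fun d : D => d.1.2) h
    simp [oneZero, add, succ] at h1 h2
    omega

end Stmt1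
end

section
/- Fix I ≥ 1 and let M_I be the structure with domain {(m,n) ∈ ℕ × ℤ : m ≤ I and (m = 0 → n ≥ 0)}, zero (0,0), successor s((m,n)) = (m,n+1), predecessor p((m,n)) = (0, max(n−1,0)) if m = 0 and (m,n−1) otherwise, and addition (m₁,n₁)+(m₂,n₂) = (n₁+n₂ paired with m₁ ↾ m₂), where a ↾ b = a if a ≠ 0 and b otherwise. Then M_I satisfies: s(0) ≠ 0, p(0)=0, p(s(x))=x, x+0=x, x+s(y)=s(x+y), x = 0 ∨ x = s(p(x)), associativity of +, and k + x = x + k for every element x and every standard element k = sᵏ(0). -/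
namespace Stmt4

/-- `a ↾ b = a` if `a ≠ 0`, and `b` otherwise. -/
def res (a b : ℕ) : ℕ := if a ≠ 0 then a else b

/-- Domain of `M_I`: pairs `(m,n) ∈ ℕ × ℤ` with `m ≤ I` and `m = 0 → n ≥ 0`. -/
def D (I : ℕ) : Type := {x : ℕ × ℤ // x.1 ≤ I ∧ (x.1 = 0 → 0 ≤ x.2)}

def zero (I : ℕ) : D I := ⟨(0, 0), ⟨Nat.zero_le I, fun _ => le_refl 0⟩⟩

def succ {I : ℕ} (a : D I) : D I :=
  ⟨(a.1.1, a.1.2 + 1), ⟨a.2.1, fun h => by have := a.2.2 h; omega⟩⟩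

def pred {I : ℕ} (a : D I) : D I :=
  if h : a.1.1 = 0 then ⟨(0, max (a.1.2 - 1) 0), ⟨Nat.zero_le I, fun _ => le_max_right _ _⟩⟩
  else ⟨(a.1.1, a.1.2 - 1), ⟨a.2.1, fun h0 => absurd h0 h⟩⟩

def add {I : ℕ} (a b : D I) : D I :=
  ⟨(res a.1.1 b.1.1, a.1.2 + b.1.2), by
    refine ⟨?_, ?_⟩
    · unfold res; split
      · exact a.2.1
      · exact b.2.1
    · intro h
      unfold res at h
      split at h
      · omega
      · rename_i h0
        push_neg at h0
        have := a.2.2 h0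
        have := b.2.2 h
        omega⟩

/-- The standard element `sᵏ(0)`. -/
def numeral (I k : ℕ) : D I := succ^[k] (zero I)

/-! On the second coordinate the operations are those of `ℤ`; on the first, `add` is the
associative operation `↾`, for which `0` is a two-sided identity. Hence every element with first
coordinate `0`, in particular every standard element, commutes with every element. -/

lemma res_zero_left (a : ℕ) : res 0 a = a := by
  simp [res]

lemma res_zero_right (a : ℕ) : res a 0 = a := by
  unfold res; split_ifs <;> omega

lemma res_assoc (a b c : ℕ) : res a (res b c) = res (res a b) c := by
  unfold res; split_ifs <;> simp_all

lemma numeral_val (I k : ℕ) : (numeral I k).1 = (0, (k : ℤ)) := by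
  induction k with
  | zero => rfl
  | succ k ih =>
    rw [numeral, Function.iterate_succ_apply', ← numeral]
    simp [succ, ih]

section

variable {I : ℕ}

lemma succ_zero_ne_zero : succ (zero I) ≠ zero I := fun h => by
  simpa [succ, zero] using congrArg (fun a : D I => a.1.2) h

lemma pred_zero : pred (zero I) = zero I :=
  Subtype.ext (by simp [pred, zero])

lemma pred_succ (x : D I) : pred (succ x) = x := by
  obtain ⟨⟨m, n⟩, -, hm_nonneg⟩ := x
  apply Subtype.ext
  by_cases hm : m = 0
  · subst hm
    have hn : 0 ≤ n := hm_nonneg rfl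
    simp only [pred, succ, ↓reduceDIte, add_sub_cancel_right, Prod.mk.injEq, true_and]
    omega
  · simp [pred, succ, hm]

lemma add_zero (x : D I) : add x (zero I) = x :=
  Subtype.ext (by simp [add, zero, res_zero_right])

lemma add_succ (x y : D I) : add x (succ y) = succ (add x y) :=
  Subtype.ext (Prod.ext rfl (_root_.add_assoc _ _ _).symm)

lemma eq_zero_or_eq_succ_pred (x : D I) : x = zero I ∨ x = succ (pred x) := by
  obtain ⟨⟨m, n⟩, -, hm_nonneg⟩ := x
  by_cases hm : m = 0
  · subst hm
    have hn : 0 ≤ n := hm_nonneg rfl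
    rcases eq_or_ne n 0 with rfl | hn_ne
    · exact .inl rfl
    · refine .inr (Subtype.ext ?_)
      simp only [succ, pred, ↓reduceDIte, Prod.mk.injEq, true_and]
      omega
  · exact .inr (Subtype.ext (by simp [pred, succ, hm]))

lemma add_assoc (x y z : D I) : add x (add y z) = add (add x y) z :=
  Subtype.ext (Prod.ext (res_assoc _ _ _) (_root_.add_assoc _ _ _).symm)

lemma add_comm_of_fst_eq_zero {a : D I} (ha : a.1.1 = 0) (x : D I) : add a x = add x a :=
  Subtype.ext (Prod.ext (by simp [add, ha, res_zero_left, res_zero_right]) (add_comm _ _))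

lemma numeral_add_comm (k : ℕ) (x : D I) : add (numeral I k) x = add x (numeral I k) :=
  add_comm_of_fst_eq_zero (by simp [numeral_val]) x

end

theorem stmt4_general (I : ℕ) :
    succ (zero I) ≠ zero I ∧
    pred (zero I) = zero I ∧
    (∀ x : D I, pred (succ x) = x) ∧
    (∀ x : D I, add x (zero I) = x) ∧
    (∀ x y : D I, add x (succ y) = succ (add x y)) ∧
    (∀ x : D I, x = zero I ∨ x = succ (pred x)) ∧
    (∀ x y z : D I, add x (add y z) = add (add x y) z) ∧
    (∀ (k : ℕ) (x : D I), add (numeral I k) x = add x (numeral I k)) :=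
  ⟨succ_zero_ne_zero, pred_zero, pred_succ, add_zero, add_succ, eq_zero_or_eq_succ_pred,
    add_assoc, numeral_add_comm⟩

theorem stmt4 (I : ℕ) (hI : 1 ≤ I) :
    succ (zero I) ≠ zero I ∧
    pred (zero I) = zero I ∧
    (∀ x : D I, pred (succ x) = x) ∧
    (∀ x : D I, add x (zero I) = x) ∧
    (∀ x y : D I, add x (succ y) = succ (add x y)) ∧
    (∀ x : D I, x = zero I ∨ x = succ (pred x)) ∧
    (∀ x y z : D I, add x (add y z) = add (add x y) z) ∧
    (∀ (k : ℕ) (x : D I), add (numeral I k) x = add x (numeral I k)) :=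
  stmt4_general I

end Stmt4
end

section
/- Let k, n, m be natural numbers with 0 < n < m. In the structure M_1 (pairs (i,j) with i ∈ {0,1}, j ∈ ℤ, j ≥ 0 when i = 0, with addition (i₁,j₁)+(i₂,j₂) = (i₁ ↾ i₂, j₁+j₂) and successor s((i,j)) = (i,j+1)), the element x = (1,k) satisfies n·x + N = m·x, where N is the standard element (0,(m−n)·k) and n·x denotes the n-fold sum x + (x + (⋯ + x)), yet x is not equal to the standard element (0,k). -/
namespace Stmt6

def res (a b : ℕ) : ℕ := if a ≠ 0 then a else b

/-- Domain of `M_1`: pairs `(i,j)` with `i ≤ 1` and `i = 0 → j ≥ 0`. -/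
def D : Type := {x : ℕ × ℤ // x.1 ≤ 1 ∧ (x.1 = 0 → 0 ≤ x.2)}

def zero : D := ⟨(0, 0), ⟨Nat.zero_le 1, fun _ => le_refl 0⟩⟩

def succ (a : D) : D :=
  ⟨(a.1.1, a.1.2 + 1), ⟨a.2.1, fun h => by have := a.2.2 h; omega⟩⟩

def add (a b : D) : D :=
  ⟨(res a.1.1 b.1.1, a.1.2 + b.1.2), by
    refine ⟨?_, ?_⟩
    · unfold res; split
      · exact a.2.1
      · exact b.2.1
    · intro h
      unfold res at h
      split at h
      · omega
      · rename_i h0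
        push_neg at h0
        have := a.2.2 h0
        have := b.2.2 h
        omega⟩

/-- `n`-fold sum: `0·x = 0`, `(i+1)·x = x + i·x`. -/
def smul : ℕ → D → D
  | 0, _ => zero
  | i + 1, x => add x (smul i x)

/-- The non-standard element `(1,k)`. -/
def xk (k : ℕ) : D := ⟨(1, (k : ℤ)), ⟨le_refl 1, fun h => absurd h one_ne_zero⟩⟩

/-- The standard element `(0, (m−n)·k)`. -/
def N (k n m : ℕ) : D :=
  ⟨(0, ((m - n) * k : ℕ)), ⟨Nat.zero_le 1, fun _ => Int.natCast_nonneg _⟩⟩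

lemma smul_xk (k : ℕ) : ∀ i, 0 < i → (smul i (xk k)).1 = (1, (i * k : ℤ)) := by
  intro i hi
  induction i with
  | zero => omega
  | succ j ih =>
    rcases Nat.eq_zero_or_pos j with h | h
    · subst h
      simp [smul, add, zero, xk, res]
    · have hj := ih h
      show (res (xk k).1.1 (smul j (xk k)).1.1, (xk k).1.2 + (smul j (xk k)).1.2) = _
      rw [hj]
      simp only [xk, res]
      norm_num
      ring

theorem stmt6 (k n m : ℕ) (hn : 0 < n) (hnm : n < m) :
    add (smul n (xk k)) (N k n m) = smul m (xk k) ∧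
    xk k ≠ ⟨(0, (k : ℤ)), ⟨Nat.zero_le 1, fun _ => Int.natCast_nonneg _⟩⟩ := by
  constructor
  · apply Subtype.ext
    show (add (smul n (xk k)) (N k n m)).1 = _
    rw [smul_xk k m (by omega)]
    simp only [add, N, smul_xk k n hn, res]
    norm_num
    have : ((m - n : ℕ) : ℤ) = (m : ℤ) - n := by omega
    push_cast [this]
    ring
  · intro h
    have : (xk k).1.1 = 0 := by rw [h]
    simp [xk] at this

end Stmt6
end

section
/- Let A be an l × (k+1) integer matrix, b ∈ ℤˡ, and let q₁, …, q_r : ℤ^{k+1} → ℤ be affine-linear functions. Define the solution set S ⊆ ℤ as the set of x₀ ∈ ℤ such that there exist x₁, …, x_k ∈ ℤ with A·(x₀,…,x_k)ᵀ = b and q_j(x₀,…,x_k) ≠ 0 for all j = 1,…,r. If S contains two distinct elements, then S is unbounded below: for every n ∈ ℕ there exists n′ ≥ n with −n′ ∈ S. -/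
namespace Stmt9

def solSet (l k r : ℕ) (A : Matrix (Fin l) (Fin (k + 1)) ℤ) (b : Fin l → ℤ)
    (c : Fin r → Fin (k + 1) → ℤ) (d : Fin r → ℤ) : Set ℤ :=
  {x0 | ∃ x : Fin (k + 1) → ℤ, x 0 = x0 ∧ A.mulVec x = b ∧
    ∀ j : Fin r, (∑ i, c j i * x i) + d j ≠ 0}

lemma key (l k r : ℕ) (A : Matrix (Fin l) (Fin (k + 1)) ℤ) (b : Fin l → ℤ)
    (c : Fin r → Fin (k + 1) → ℤ) (d : Fin r → ℤ)
    (p w : Fin (k + 1) → ℤ) (hp : A.mulVec p = b)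
    (hq : ∀ j, (∑ i, c j i * p i) + d j ≠ 0)
    (hw : A.mulVec w = 0) (hw0 : w 0 < 0) :
    ∀ n : ℕ, ∃ n' : ℕ, n ≤ n' ∧ (-(n' : ℤ)) ∈ solSet l k r A b c d := by
  intro n
  set s : Fin r → ℤ := fun j => ∑ i, c j i * w i with hs
  set qx : Fin r → ℤ := fun j => (∑ i, c j i * p i) + d j with hqx
  set T : ℤ := (n : ℤ) + (p 0).natAbs with hT
  set g : Fin r → ℤ := fun j => if s j = 0 then T - 1 else (-(qx j)) / s j with hg
  have hcard : (Finset.image g Finset.univ).card < (Finset.Icc T (T + r)).card := by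
    have h1 : (Finset.image g Finset.univ).card ≤ r := by
      calc (Finset.image g Finset.univ).card ≤ (Finset.univ : Finset (Fin r)).card :=
        Finset.card_image_le
      _ = r := by simp
    have h2 : (Finset.Icc T (T + r)).card = r + 1 := by
      rw [Int.card_Icc]
      omega
    omega
  obtain ⟨t, ht, htg⟩ : ∃ t ∈ Finset.Icc T (T + r), t ∉ Finset.image g Finset.univ := by
    by_contra hcon
    push_neg at hcon
    exact absurd (Finset.card_le_card hcon) (by omega)
  rw [Finset.mem_Icc] at ht
  have hT0 : 0 ≤ T := by positivity
  have ht0 : 0 ≤ t := le_trans hT0 ht.1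
  have hle : p 0 + t * w 0 ≤ -(n : ℤ) := by
    have : t * w 0 ≤ t * (-1) := by
      apply mul_le_mul_of_nonneg_left _ ht0
      omega
    have habs : -(p 0) ≤ ((p 0).natAbs : ℤ) := by omega
    omega
  refine ⟨(-(p 0 + t * w 0)).toNat, ?_, ?_⟩
  · omega
  · refine ⟨fun i => p i + t * w i, ?_, ?_, ?_⟩
    · simp only []
      omega
    · have : A.mulVec (fun i => p i + t * w i) = A.mulVec p + t • A.mulVec w := by
        have : (fun i => p i + t * w i) = p + t • w := by
          funext i; simp [Pi.smul_apply, smul_eq_mul]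
        rw [this, Matrix.mulVec_add, Matrix.mulVec_smul]
      rw [this, hw, hp]
      simp
    · intro j
      have hsum : (∑ i, c j i * (p i + t * w i)) + d j = qx j + t * s j := by
        have h1 : ∑ i, c j i * (t * w i) = t * ∑ i, c j i * w i := by
          rw [Finset.mul_sum]; exact Finset.sum_congr rfl fun i _ => by ring
        simp only [hqx, hs, mul_add, Finset.sum_add_distrib, h1]
        ring
      rw [hsum]
      by_cases hsj : s j = 0
      · rw [hsj]
        simpa using hq j
      · intro hzero
        apply htg
        rw [Finset.mem_image]
        refine ⟨j, Finset.mem_univ j, ?_⟩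
        rw [hg]
        simp only [if_neg hsj]
        rw [show -(qx j) = t * s j by omega, Int.mul_ediv_cancel _ hsj]

theorem stmt9 (l k r : ℕ) (A : Matrix (Fin l) (Fin (k + 1)) ℤ) (b : Fin l → ℤ)
    (c : Fin r → Fin (k + 1) → ℤ) (d : Fin r → ℤ)
    (h : ∃ u v : ℤ, u ∈ solSet l k r A b c d ∧ v ∈ solSet l k r A b c d ∧ u ≠ v) :
    ∀ n : ℕ, ∃ n' : ℕ, n ≤ n' ∧ (-(n' : ℤ)) ∈ solSet l k r A b c d := by
  obtain ⟨u, v, ⟨x, hx0, hxA, hxq⟩, ⟨y, hy0, hyA, hyq⟩, huv⟩ := h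
  have hxy : x 0 ≠ y 0 := by rw [hx0, hy0]; exact huv
  rcases lt_or_gt_of_ne hxy with hlt | hgt
  · -- y0 > x0, use base y, direction x - y (negative)
    apply key l k r A b c d y (x - y) hyA hyq
    · rw [Matrix.mulVec_sub, hxA, hyA]; simp
    · simp only [Pi.sub_apply]; omega
  · apply key l k r A b c d x (y - x) hxA hxq
    · rw [Matrix.mulVec_sub, hxA, hyA]; simp
    · simp only [Pi.sub_apply]; omega

end Stmt9
end

section
/- Let M_2 be the structure with domain {(m,n) ∈ ℕ × ℤ : m ≤ 2, m = 0 → n ≥ 0} and addition (m₁,n₁)+(m₂,n₂) = (m₁ ↾ m₂, n₁+n₂), where a ↾ b = a if a ≠ 0 and b otherwise. Then addition in M_2 is associative but not commutative: (1,0) + (2,0) = (1,0) while (2,0) + (1,0) = (2,0). -/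
namespace Stmt17

def res (a b : ℕ) : ℕ := if a ≠ 0 then a else b

/-- Domain of `M_2`: pairs `(m,n) ∈ ℕ × ℤ` with `m ≤ 2` and `m = 0 → n ≥ 0`. -/
def D : Type := {x : ℕ × ℤ // x.1 ≤ 2 ∧ (x.1 = 0 → 0 ≤ x.2)}

def add (a b : D) : D :=
  ⟨(res a.1.1 b.1.1, a.1.2 + b.1.2), by
    refine ⟨?_, ?_⟩
    · unfold res; split
      · exact a.2.1
      · exact b.2.1
    · intro h
      unfold res at h
      split at h
      · omega
      · rename_i h0
        push_neg at h0
        have := a.2.2 h0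
        have := b.2.2 h
        omega⟩

def a : D := ⟨(1, 0), ⟨by omega, fun h => absurd h one_ne_zero⟩⟩

def b : D := ⟨(2, 0), ⟨by omega, fun h => absurd h (by omega)⟩⟩

theorem stmt17 :
    (∀ x y z : D, add x (add y z) = add (add x y) z) ∧
    add a b = a ∧ add b a = b ∧ ¬ (∀ x y : D, add x y = add y x) := by
  refine ⟨fun x y z => ?_, ?_, ?_, fun h => ?_⟩
  · apply Subtype.ext
    simp only [add, res]
    refine Prod.ext ?_ (by ring)
    simp only
    split <;> simp_all
  · apply Subtype.ext; simp [add, res, a, b]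
  · apply Subtype.ext; simp [add, res, a, b]
  · have := h a b
    have : (add a b).1 = (add b a).1 := by rw [this]
    simp [add, res, a, b] at this

end Stmt17
end
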